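/- arXiv:1702.00285 — 9 statements merged into one kernel-verified Lean document; each statement's English description precedes it below -/
import Mathlib

section
/- Let q be a prime power with q ≡ 1 (mod 4), and let u, v be distinct elements of F_q. Then the number of common neighbours of u and v in the Paley graph P(q), i.e. the cardinality of (S+u) ∩ (S+v) where S is the set of nonzero squares, equals (q − 3 − 2χ(u−v))/4; in particular it is (q−5)/4 if u−v ∈ S and (q−1)/4 if u−v ∉ S. -/
/-!
Count with the weight `(1 + χ(x - u)) (1 + χ(x - v))`, which is `4` exactly at the common
neighbours of `u` and `v`, and whose sum over `F_q` is `q - 1` because `χ` sums to `0` and its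
shifted autocorrelation `∑ χ(x) χ(x + a)` is a Jacobi sum equal to `-1`. The two exceptional
points `x = u, v` contribute `1 + χ(u - v)` each, as `χ(-1) = 1` when `q ≡ 1 (mod 4)`.
-/

open Finset

section QuadraticChar

variable {F : Type*} [Field F] [Fintype F] [DecidableEq F]

lemma quadraticChar_eq_one_iff {a : F} : quadraticChar F a = 1 ↔ a ≠ 0 ∧ IsSquare a := by
  by_cases ha : a = 0
  · simp [ha]
  · rw [quadraticChar_one_iff_isSquare ha]
    simp [ha]

lemma quadraticChar_sum_add_eq_zero (hF : ringChar F ≠ 2) (a : F) :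
    ∑ x : F, quadraticChar F (x + a) = 0 :=
  (Equiv.sum_comp (Equiv.addRight a) (quadraticChar F)).trans (quadraticChar_sum_zero hF)

lemma quadraticChar_sum_mul_add (hF : ringChar F ≠ 2) {a : F} (ha : a ≠ 0) :
    ∑ x : F, quadraticChar F x * quadraticChar F (x + a) = -1 := by
  set χ := quadraticChar F
  have hJ : ∑ y : F, χ y * χ (1 - y) = -χ (-1) := by
    have hJ := jacobiSum_nontrivial_inv (quadraticChar_ne_one hF)
    rwa [(quadraticChar_isQuadratic F).inv, jacobiSum] at hJ
  -- Substituting `x = -a y` turns the sum into `χ(-1) J(χ, χ) = χ(-1) (-χ(-1))`.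
  calc ∑ x : F, χ x * χ (x + a)
      = ∑ y : F, χ (-a * y) * χ (-a * y + a) :=
        (Equiv.sum_comp (Equiv.mulLeft₀ (-a) (neg_ne_zero.mpr ha))
          fun x ↦ χ x * χ (x + a)).symm
    _ = ∑ y : F, χ (-1) * χ a ^ 2 * (χ y * χ (1 - y)) := by
        refine Fintype.sum_congr _ _ fun y ↦ ?_
        rw [show -a * y + a = a * (1 - y) by ring, show -a * y = -1 * a * y by ring]
        simp only [map_mul]
        ring
    _ = -1 := by
        rw [← mul_sum, hJ, quadraticChar_sq_one ha]
        linear_combination -quadraticChar_sq_one (F := F) (neg_ne_zero.mpr one_ne_zero)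

lemma quadraticChar_neg_of_card_mod_four_eq_one (h4 : Fintype.card F % 4 = 1) (a : F) :
    quadraticChar F (-a) = quadraticChar F a := by
  have hneg : quadraticChar F (-1) = 1 :=
    quadraticChar_eq_one_iff.mpr ⟨neg_ne_zero.mpr one_ne_zero,
      FiniteField.isSquare_neg_one_iff.mpr (by omega)⟩
  rw [← neg_one_mul, map_mul, hneg, one_mul]

lemma image_add_right_nonzero_squares (a : F) :
    (· + a) '' {x : F | x ≠ 0 ∧ IsSquare x} = {x | quadraticChar F (x - a) = 1} := by
  ext x
  simp only [Set.image_add_right, Set.mem_preimage, Set.mem_ofPred_eq, ← sub_eq_add_neg,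
    quadraticChar_eq_one_iff]

lemma four_mul_card_filter_quadraticChar_sub_eq_one (hF : ringChar F ≠ 2) {u v : F}
    (huv : u ≠ v) :
    4 * (#{x | quadraticChar F (x - u) = 1 ∧ quadraticChar F (x - v) = 1} : ℤ)
      = Fintype.card F - 3 - quadraticChar F (u - v) - quadraticChar F (v - u) := by
  set χ := quadraticChar F
  have hpoint : ∀ x, (1 + χ (x - u)) * (1 + χ (x - v))
      = 4 * (if χ (x - u) = 1 ∧ χ (x - v) = 1 then 1 else 0)
        + (if x = u then 1 + χ (u - v) else 0) + (if x = v then 1 + χ (v - u) else 0) := by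
    intro x
    rcases eq_or_ne x u with rfl | hxu
    · simp [χ, huv]
    rcases eq_or_ne x v with rfl | hxv
    · simp [χ, hxu]
    rcases quadraticChar_dichotomy (sub_ne_zero.mpr hxu) with hu | hu <;>
      rcases quadraticChar_dichotomy (sub_ne_zero.mpr hxv) with hv | hv <;>
      simp [χ, hu, hv, hxu, hxv]
  have hcross : ∑ x : F, χ (x - u) * χ (x - v) = -1 := by
    rw [← quadraticChar_sum_mul_add hF (sub_ne_zero.mpr huv),
      ← Equiv.sum_comp (Equiv.addRight u)]
    simp only [Equiv.coe_addRight, add_sub_cancel_right, add_sub_assoc]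
    rfl
  have htotal : ∑ x : F, (1 + χ (x - u)) * (1 + χ (x - v)) = Fintype.card F - 1 := by
    have hshift (a : F) : ∑ x : F, χ (x - a) = 0 := by
      simpa only [← sub_eq_add_neg] using quadraticChar_sum_add_eq_zero hF (-a)
    simp only [add_mul, one_mul, mul_add, mul_one, sum_add_distrib, hshift, hcross,
      sum_const, card_univ, nsmul_eq_mul]
    ring
  rw [Fintype.sum_congr _ _ hpoint] at htotal
  simp only [sum_add_distrib, ← mul_sum, sum_boole, sum_ite_eq', mem_univ, if_true] at htotal
  linarith

end QuadraticChar

/-- For a prime power `q ≡ 1 (mod 4)` and distinct `u v ∈ F_q`, the number of common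
neighbours of `u` and `v` in the Paley graph, i.e. `|(S+u) ∩ (S+v)|` where `S` is the set
of nonzero squares, equals `(q − 3 − 2χ(u−v))/4`; in particular it is `(q−5)/4` if
`u − v ∈ S` and `(q−1)/4` if `u − v ∉ S`. -/
theorem paley_common_neighbours {F : Type*} [Field F] [Fintype F] [DecidableEq F]
    (h4 : Fintype.card F % 4 = 1)
    (S : Set F) (hS : S = {x : F | x ≠ 0 ∧ IsSquare x})
    {u v : F} (huv : u ≠ v) :
    4 * ((((· + u) '' S) ∩ ((· + v) '' S)).ncard : ℤ)
        = (Fintype.card F : ℤ) - 3 - 2 * quadraticChar F (u - v) ∧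
    (u - v ∈ S →
      4 * ((((· + u) '' S) ∩ ((· + v) '' S)).ncard : ℤ) = (Fintype.card F : ℤ) - 5) ∧
    (u - v ∉ S →
      4 * ((((· + u) '' S) ∩ ((· + v) '' S)).ncard : ℤ) = (Fintype.card F : ℤ) - 1) := by
  have hF : ringChar F ≠ 2 := fun h ↦ by
    have := FiniteField.even_card_of_char_two h
    omega
  have hcommon : ((· + u) '' S) ∩ ((· + v) '' S)
      = ↑({x | quadraticChar F (x - u) = 1 ∧ quadraticChar F (x - v) = 1} : Finset F) := by
    rw [hS, image_add_right_nonzero_squares, image_add_right_nonzero_squares, coe_filter]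
    simp only [mem_univ, true_and]
    rfl
  have hcount : 4 * ((((· + u) '' S) ∩ ((· + v) '' S)).ncard : ℤ)
      = Fintype.card F - 3 - 2 * quadraticChar F (u - v) := by
    rw [hcommon, Set.ncard_coe_finset, four_mul_card_filter_quadraticChar_sub_eq_one hF huv,
      ← neg_sub u v, quadraticChar_neg_of_card_mod_four_eq_one h4]
    ring
  have hS' : u - v ∈ S ↔ quadraticChar F (u - v) = 1 := by
    rw [hS, quadraticChar_eq_one_iff]
    rfl
  refine ⟨hcount, fun hmem ↦ ?_, fun hmem ↦ ?_⟩
  · rw [hcount, hS'.mp hmem]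
    ring
  · rw [hcount, (quadraticChar_eq_neg_one_iff_not_one (sub_ne_zero.mpr huv)).mpr (hS'.not.mp hmem)]
    ring
end

section
/- Let q be a prime power with q ≡ 3 (mod 4), and let S be the set of nonzero squares in F_q. Then for every pair of distinct elements u, v ∈ F_q, the cardinality of (S+u) ∩ (S+v) equals (q−3)/4. -/
open Finset

/-- Key character sum: `∑ x, χ(x) χ(x+a) = -1` for `a ≠ 0`. -/
lemma paley_key_sum {F : Type*} [Field F] [Fintype F] [DecidableEq F]
    (hF : ringChar F ≠ 2) {a : F} (ha : a ≠ 0) :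
    ∑ x : F, quadraticChar F x * quadraticChar F (x + a) = -1 := by
  have h1 : ∀ x : F, quadraticChar F x * quadraticChar F (x + a)
      = if x = 0 then 0 else quadraticChar F (1 + a * x⁻¹) := by
    intro x
    split_ifs with hx
    · simp [hx]
    · have hxa : x + a = x * (1 + a * x⁻¹) := by field_simp
      rw [hxa, map_mul, ← mul_assoc, ← sq, quadraticChar_sq_one hx, one_mul]
  have h2 : ∀ x : F, (if x = 0 then (0 : ℤ) else quadraticChar F (1 + a * x⁻¹))
      = quadraticChar F (1 + a * x⁻¹) - (if x = 0 then 1 else 0) := by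
    intro x
    split_ifs with hx
    · simp [hx]
    · ring
  have hg : Function.Bijective (fun x : F => 1 + a * x⁻¹) := by
    rw [Function.bijective_iff_has_inverse]
    refine ⟨fun z => a * (z - 1)⁻¹, fun x => ?_, fun z => ?_⟩
    · simp only [add_sub_cancel_left]
      rcases eq_or_ne x 0 with rfl | hx
      · simp
      · rw [mul_inv, inv_inv, ← mul_assoc, mul_inv_cancel₀ ha, one_mul]
    · simp only
      rcases eq_or_ne z 1 with rfl | hz
      · simp
      · have h1 : z - 1 ≠ 0 := sub_ne_zero.mpr hz
        rw [mul_inv, inv_inv, ← mul_assoc, mul_inv_cancel₀ ha, one_mul]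
        ring
  have hbij : ∑ x : F, quadraticChar F (1 + a * x⁻¹) = ∑ z : F, quadraticChar F z :=
    Fintype.sum_bijective _ hg _ _ (fun x => rfl)
  calc ∑ x : F, quadraticChar F x * quadraticChar F (x + a)
      = ∑ x : F, (quadraticChar F (1 + a * x⁻¹) - (if x = 0 then 1 else 0)) := by
        refine Finset.sum_congr rfl fun x _ => ?_
        rw [h1 x, h2 x]
    _ = (∑ x : F, quadraticChar F (1 + a * x⁻¹)) - ∑ x : F, (if x = 0 then (1:ℤ) else 0) := by
        rw [Finset.sum_sub_distrib]
    _ = -1 := by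
        rw [hbij, quadraticChar_sum_zero hF]
        simp

/-- For a prime power `q ≡ 3 (mod 4)` and distinct `u v ∈ F_q`, the cardinality of
`(S+u) ∩ (S+v)` equals `(q−3)/4`, where `S` is the set of nonzero squares of `F_q`. -/
theorem paley_tournament_common_neighbours {F : Type*} [Field F] [Fintype F] [DecidableEq F]
    (h4 : Fintype.card F % 4 = 3)
    (S : Set F) (hS : S = {x : F | x ≠ 0 ∧ IsSquare x})
    {u v : F} (huv : u ≠ v) :
    4 * (((· + u) '' S) ∩ ((· + v) '' S)).ncard = Fintype.card F - 3 := by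
  classical
  have hF2 : ringChar F ≠ 2 := by
    intro h
    have h2 := (FiniteField.even_card_iff_char_two (F := F)).mp h
    omega
  have hneg1 : quadraticChar F (-1) = -1 := by
    rw [quadraticChar_neg_one hF2, ZMod.χ₄_nat_three_mod_four h4]
  set a := u - v with haa
  have ha0 : a ≠ 0 := sub_ne_zero.mpr huv
  -- membership description
  have hmem : ∀ (w x : F), x ∈ (· + w) '' S ↔ quadraticChar F (x - w) = 1 := by
    intro w x
    simp only [hS, Set.mem_image, Set.mem_setOf_eq]
    constructor
    · rintro ⟨s, ⟨hs0, hs⟩, rfl⟩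
      rw [add_sub_cancel_right]
      exact (quadraticChar_one_iff_isSquare hs0).mpr hs
    · intro h
      have hx0 : x - w ≠ 0 := by
        intro h0
        rw [h0, quadraticChar_zero] at h
        exact one_ne_zero h.symm
      exact ⟨x - w, ⟨hx0, (quadraticChar_one_iff_isSquare hx0).mp h⟩, by ring⟩
  set T : Finset F := Finset.univ.filter
      (fun x => quadraticChar F (x - u) = 1 ∧ quadraticChar F (x - v) = 1) with hT
  have hset : ((· + u) '' S) ∩ ((· + v) '' S) = ↑T := by
    ext x
    simp only [Set.mem_inter_iff, hmem u x, hmem v x, hT, Finset.coe_filter,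
      Finset.mem_univ, true_and, Set.mem_setOf_eq]
  rw [hset, Set.ncard_coe_finset]
  -- the shifted quadratic character sums to zero
  have hshift : ∀ w : F, ∑ x : F, quadraticChar F (x - w) = 0 := by
    intro w
    have h := Fintype.sum_bijective _ (Equiv.addRight w).bijective
      (fun x : F => quadraticChar F x) (fun x : F => quadraticChar F (x - w))
      (fun x => by simp)
    rw [← h]
    exact quadraticChar_sum_zero hF2
  have hmul : ∑ x : F, quadraticChar F (x - u) * quadraticChar F (x - v) = -1 := by
    have h := Fintype.sum_bijective _ (Equiv.addRight u).bijective
      (fun y : F => quadraticChar F y * quadraticChar F (y + a))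
      (fun x : F => quadraticChar F (x - u) * quadraticChar F (x - v))
      (fun y => by
        simp only [Equiv.coe_addRight, add_sub_cancel_right]
        congr 2
        rw [haa]; ring)
    rw [← h]
    exact paley_key_sum hF2 ha0
  set f : F → ℤ := fun x => (1 + quadraticChar F (x - u)) * (1 + quadraticChar F (x - v))
    with hf
  have hsum_univ : ∑ x : F, f x = (Fintype.card F : ℤ) - 1 := by
    have hexp : ∀ x : F, f x = 1 + quadraticChar F (x - u) + quadraticChar F (x - v)
        + quadraticChar F (x - u) * quadraticChar F (x - v) := fun x => by rw [hf]; ring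
    rw [Finset.sum_congr rfl (fun x _ => hexp x), Finset.sum_add_distrib,
      Finset.sum_add_distrib, Finset.sum_add_distrib, hshift u, hshift v, hmul,
      Finset.sum_const, Finset.card_univ]
    ring
  -- sum over F minus {u, v}
  set s : Finset F := (Finset.univ.erase u).erase v with hs
  have hvmem : v ∈ Finset.univ.erase u := Finset.mem_erase.mpr ⟨Ne.symm huv, Finset.mem_univ v⟩
  have h1 : f u + ∑ x ∈ Finset.univ.erase u, f x = ∑ x : F, f x :=
    Finset.add_sum_erase _ f (Finset.mem_univ u)
  have h2 : f v + ∑ x ∈ s, f x = ∑ x ∈ Finset.univ.erase u, f x :=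
    Finset.add_sum_erase _ f hvmem
  have hfu : f u = 1 + quadraticChar F a := by
    rw [hf]; simp [haa]
  have hfv : f v = 1 - quadraticChar F a := by
    rw [hf]
    have : v - u = (-1) * a := by rw [haa]; ring
    simp only [sub_self, quadraticChar_zero, add_zero, mul_one, this, map_mul, hneg1]
    ring
  have hsum_s : ∑ x ∈ s, f x = (Fintype.card F : ℤ) - 3 := by
    have := h1
    rw [← h2] at this
    rw [hsum_univ] at this
    rw [hfu, hfv] at this
    linarith
  -- sum over s equals 4 * T.card
  have hTs : s.filter (fun x => quadraticChar F (x - u) = 1 ∧ quadraticChar F (x - v) = 1)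
      = T := by
    ext x
    simp only [hT, hs, Finset.mem_filter, Finset.mem_erase, Finset.mem_univ, true_and,
      and_true]
    constructor
    · rintro ⟨_, h⟩; exact h
    · rintro ⟨h1', h2'⟩
      refine ⟨⟨?_, ?_⟩, h1', h2'⟩
      · intro hxv
        rw [hxv, sub_self, quadraticChar_zero] at h2'
        exact one_ne_zero h2'.symm
      · intro hxu
        rw [hxu, sub_self, quadraticChar_zero] at h1'
        exact one_ne_zero h1'.symm
  have hsT : ∑ x ∈ s, f x = 4 * T.card := by
    have hpt : ∀ x ∈ s, f x = if quadraticChar F (x - u) = 1 ∧ quadraticChar F (x - v) = 1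
        then (4 : ℤ) else 0 := by
      intro x hx
      simp only [hs, Finset.mem_erase, Finset.mem_univ, and_true] at hx
      have hxu : x - u ≠ 0 := sub_ne_zero.mpr hx.2
      have hxv : x - v ≠ 0 := sub_ne_zero.mpr hx.1
      rcases quadraticChar_dichotomy hxu with hu1 | hu1 <;>
        rcases quadraticChar_dichotomy hxv with hv1 | hv1 <;>
        simp only [hf, hu1, hv1] <;> norm_num
    rw [Finset.sum_congr rfl hpt, ← Finset.sum_filter, hTs, Finset.sum_const]
    ring
  have hZ : (4 * T.card : ℤ) = (Fintype.card F : ℤ) - 3 := by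
    rw [← hsT, hsum_s]
  have hq3 : 3 ≤ Fintype.card F := by omega
  omega
end

section
/- Let G be a finite simple graph that is self-complementary (isomorphic to its complement) and arc-transitive (its automorphism group acts transitively on ordered pairs of adjacent vertices), with at least one edge. Then G is strongly regular with parameters v = 4t+1, k = 2t, λ = t−1 and μ = t for some natural number t. -/
open SimpleGraph

/-- An isomorphism of graphs preserves the number of common neighbours. -/
private lemma iso_card_commonNeighbors {V : Type*} {G H : SimpleGraph V}
    (f : G ≃g H) (u v : V) [Fintype (G.commonNeighbors u v)]
    [Fintype (H.commonNeighbors (f u) (f v))] :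
    Fintype.card (G.commonNeighbors u v) = Fintype.card (H.commonNeighbors (f u) (f v)) := by
  apply Fintype.card_congr
  refine Equiv.subtypeEquiv f.toEquiv fun x => ?_
  simp [SimpleGraph.mem_commonNeighbors, f.map_adj_iff]

/-- An isomorphism of graphs preserves degrees. -/
private lemma iso_degree {V : Type*} [Fintype V] [DecidableEq V] {G H : SimpleGraph V}
    [DecidableRel G.Adj] [DecidableRel H.Adj]
    (f : G ≃g H) (v : V) : G.degree v = H.degree (f v) := by
  simp only [← SimpleGraph.card_neighborSet_eq_degree]
  exact Fintype.card_congr (f.mapNeighborSet v)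

/-- An isomorphism of graphs induces an isomorphism of complements. -/
private def complIso {V : Type*} {G H : SimpleGraph V} (f : G ≃g H) : Gᶜ ≃g Hᶜ where
  toEquiv := f.toEquiv
  map_rel_iff' := by
    intro a b
    simp [SimpleGraph.compl_adj, f.map_adj_iff, f.toEquiv.injective.ne_iff]

open scoped Classical in
/-- A finite simple graph with at least one edge which is self-complementary and
arc-transitive is strongly regular with parameters `v = 4t+1`, `k = 2t`, `λ = t−1`,
`μ = t` for some natural number `t`. -/
theorem selfCompl_arcTransitive_isSRG {V : Type*} [Fintype V] (G : SimpleGraph V)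
    (hsc : Nonempty (G ≃g Gᶜ))
    (hat : ∀ u₁ v₁ u₂ v₂ : V, G.Adj u₁ v₁ → G.Adj u₂ v₂ →
      ∃ f : G ≃g G, f u₁ = u₂ ∧ f v₁ = v₂)
    (hedge : ∃ u v : V, G.Adj u v) :
    ∃ t : ℕ, G.IsSRGWith (4 * t + 1) (2 * t) (t - 1) t := by
  obtain ⟨e⟩ := hsc
  obtain ⟨u₀, v₀, huv₀⟩ := hedge
  have hnontriv : Nontrivial V := ⟨u₀, v₀, huv₀.ne⟩
  -- every vertex has a neighbour
  have hnbr : ∀ x : V, ∃ y, G.Adj x y := by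
    intro x
    by_contra h
    push_neg at h
    have h2 : ∀ z, ¬ Gᶜ.Adj (e x) z := by
      intro z
      obtain ⟨y, rfl⟩ := e.toEquiv.surjective z
      intro hzz
      exact h y (e.map_adj_iff.mp hzz)
    have h3 : ∀ z, z ≠ e x → G.Adj (e x) z := by
      intro z hz
      by_contra hadj
      exact h2 z ⟨Ne.symm hz, hadj⟩
    by_cases hx : e x = x
    · obtain ⟨z, hz⟩ := exists_ne x
      have := h3 z (by rw [hx]; exact hz)
      rw [hx] at this
      exact h z this
    · exact h (e x) (h3 x (Ne.symm hx)).symm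
  -- vertex transitivity
  have hvt : ∀ x y : V, ∃ f : G ≃g G, f x = y := by
    intro x y
    obtain ⟨x', hx'⟩ := hnbr x
    obtain ⟨y', hy'⟩ := hnbr y
    obtain ⟨f, hf, -⟩ := hat x x' y y' hx' hy'
    exact ⟨f, hf⟩
  set n := Fintype.card V with hn
  set k := G.degree u₀ with hk
  have hreg : G.IsRegularOfDegree k := by
    intro x
    obtain ⟨f, hf⟩ := hvt u₀ x
    rw [← hf]
    exact (iso_degree f u₀).symm
  -- a non-edge
  have hpq : Gᶜ.Adj (e u₀) (e v₀) := e.map_adj_iff.mpr huv₀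
  set p := e u₀ with hp
  set q := e v₀ with hq
  set ℓ := Fintype.card (G.commonNeighbors u₀ v₀) with hℓdef
  set m := Fintype.card (G.commonNeighbors p q) with hmdef
  -- λ is constant on edges
  have hadj_card : ∀ v w : V, G.Adj v w → Fintype.card (G.commonNeighbors v w) = ℓ := by
    intro v w hvw
    obtain ⟨f, hf1, hf2⟩ := hat u₀ v₀ v w huv₀ hvw
    rw [← hf1, ← hf2, ← iso_card_commonNeighbors f u₀ v₀]
  -- μ is constant on non-edges
  have hnadj_card : ∀ v w : V, v ≠ w → ¬ G.Adj v w →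
      Fintype.card (G.commonNeighbors v w) = m := by
    intro v w hvw hna
    have hc : Gᶜ.Adj v w := ⟨hvw, hna⟩
    have h1 : G.Adj (e.symm v) (e.symm w) := e.symm.map_adj_iff.mpr hc
    obtain ⟨f, hf1, hf2⟩ := hat u₀ v₀ (e.symm v) (e.symm w) huv₀ h1
    set g : Gᶜ ≃g Gᶜ := (e.symm.trans f).trans e with hg
    have hgp : g p = v := by
      show e (f (e.symm (e u₀))) = v
      rw [e.symm_apply_apply, hf1, e.apply_symm_apply]
    have hgq : g q = w := by
      show e (f (e.symm (e v₀))) = w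
      rw [e.symm_apply_apply, hf2, e.apply_symm_apply]
    have := iso_card_commonNeighbors (complIso g) p q
    simp only [compl_compl] at this
    have hgp' : (complIso g) p = v := hgp
    have hgq' : (complIso g) q = w := hgq
    rw [hgp', hgq'] at this
    exact this.symm
  have hSRG : G.IsSRGWith n k ℓ m :=
    ⟨rfl, hreg, hadj_card, fun v w hvw hna => hnadj_card v w hvw hna⟩
  -- the complement is SRG with the same parameters
  have hSRGc : Gᶜ.IsSRGWith n k ℓ m := by
    refine ⟨rfl, ?_, ?_, ?_⟩
    · intro x
      rw [iso_degree e.symm x]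
      exact hreg _
    · intro x y hxy
      rw [iso_card_commonNeighbors e.symm x y]
      exact hadj_card _ _ (e.symm.map_adj_iff.mpr hxy)
    · intro x y hxy hna
      rw [iso_card_commonNeighbors e.symm x y]
      refine hnadj_card _ _ (fun h => hxy (e.symm.injective h)) ?_
      intro h
      exact hna (e.symm.map_adj_iff.mp h)
  have hC := hSRG.compl
  have hkpos : 0 < k := (G.degree_pos_iff_exists_adj u₀).mpr ⟨v₀, huv₀⟩
  have hkn : k < n := G.degree_lt_card_verts u₀
  have hknn : n - k - 1 = k := by
    have h1 := hC.regular u₀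
    have h2 := hSRGc.regular u₀
    rw [h1] at h2
    exact h2
  have hm_le : m ≤ k := by
    have := G.card_commonNeighbors_le_degree_left p q
    rw [hreg p] at this
    exact this
  have hℓeq : Fintype.card (Gᶜ.commonNeighbors p q) = ℓ := hSRGc.of_adj p q hpq
  have hℓeq2 : Fintype.card (Gᶜ.commonNeighbors p q) = n - (2 * k - m) - 2 :=
    hC.of_adj p q hpq
  have hℓ : ℓ = n - (2 * k - m) - 2 := by rw [← hℓeq, hℓeq2]
  have hpe := SimpleGraph.IsSRGWith.param_eq G hSRG (by omega : 0 < n)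
  rw [hknn] at hpe
  have hkeq : k - ℓ - 1 = m := Nat.eq_of_mul_eq_mul_left hkpos hpe
  -- rule out m = 0 using the handshake lemma
  have hparity : n * k = 2 * G.edgeFinset.card := by
    rw [← G.sum_degrees_eq_twice_card_edges]
    rw [Finset.sum_congr rfl fun v _ => hreg v, Finset.sum_const, Finset.card_univ,
      smul_eq_mul]
  have hm1 : 1 ≤ m := by
    by_contra hm
    push_neg at hm
    have hk1 : k = 1 ∧ n = 3 := by omega
    rw [hk1.1, hk1.2] at hparity
    omega
  refine ⟨m, ?_⟩
  have e1 : 4 * m + 1 = n := by omega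
  have e2 : 2 * m = k := by omega
  have e3 : m - 1 = ℓ := by omega
  rw [e1, e2, e3]
  exact hSRG
end

section
/- Let p be an odd prime, write p = 4n−1 or p = 4n+1, let S be the set of nonzero squares in F_p, let S₀ = S ∪ {0}, and let a be a nonzero element of F_p. Then the cardinality of (S₀ + a) ∩ S₀ equals n if p = 4n−1 or if a ∉ S, and equals n+1 if p = 4n+1 and a ∈ S. -/
open Finset

lemma jacobi_aux {p : ℕ} [Fact p.Prime] (hF : ringChar (ZMod p) ≠ 2)
    {a : ZMod p} (ha : a ≠ 0) :
    ∑ y : ZMod p, quadraticChar (ZMod p) y * quadraticChar (ZMod p) (y - a) = -1 := by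
  classical
  set χ := quadraticChar (ZMod p) with hχ
  have h0 : ∑ y : ZMod p, χ y * χ (y - a)
      = ∑ y ∈ Finset.univ.erase (0 : ZMod p), χ y * χ (y - a) := by
    rw [← Finset.sum_erase_add _ _ (Finset.mem_univ (0 : ZMod p))]
    simp [hχ, quadraticChar_zero]
  have h1 : ∀ y ∈ Finset.univ.erase (0 : ZMod p),
      χ y * χ (y - a) = χ (1 - a * y⁻¹) := by
    intro y hy
    have hy0 : y ≠ 0 := (Finset.mem_erase.mp hy).1
    have : y - a = y * (1 - a * y⁻¹) := by field_simp
    rw [this, map_mul, ← mul_assoc, ← pow_two, quadraticChar_sq_one hy0, one_mul]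
  have h2 : ∑ y ∈ Finset.univ.erase (0 : ZMod p), χ (1 - a * y⁻¹)
      = ∑ z ∈ Finset.univ.erase (1 : ZMod p), χ z := by
    apply Finset.sum_nbij' (fun y => 1 - a * y⁻¹) (fun z => a * (1 - z)⁻¹)
    · intro y hy
      have hy0 : y ≠ 0 := (Finset.mem_erase.mp hy).1
      simp only [Finset.mem_erase, Finset.mem_univ, and_true]
      intro h
      apply ha
      have : a * y⁻¹ = 0 := by linear_combination -h
      rcases mul_eq_zero.mp this with h' | h'
      · exact h'
      · exact absurd (inv_eq_zero.mp h') hy0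
    · intro z hz
      have hz1 : z ≠ 1 := (Finset.mem_erase.mp hz).1
      simp only [Finset.mem_erase, Finset.mem_univ, and_true]
      intro h
      rcases mul_eq_zero.mp h with h' | h'
      · exact ha h'
      · exact hz1 (by have := inv_eq_zero.mp h'; linear_combination -this)
    · intro y hy
      have hy0 : y ≠ 0 := (Finset.mem_erase.mp hy).1
      have h1 : (1:ZMod p) - (1 - a * y⁻¹) = a * y⁻¹ := by ring
      rw [h1, mul_inv, inv_inv, ← mul_assoc, mul_inv_cancel₀ ha, one_mul]
    · intro z hz
      have hz1 : z ≠ 1 := (Finset.mem_erase.mp hz).1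
      have h1z : (1:ZMod p) - z ≠ 0 := sub_ne_zero.mpr (Ne.symm hz1)
      have h2 : a * (a * (1 - z)⁻¹)⁻¹ = 1 - z := by field_simp
      rw [h2]; ring
    · intro y hy; rfl
  have h3 : ∑ z ∈ Finset.univ.erase (1 : ZMod p), χ z = -1 := by
    have := Finset.sum_erase_add Finset.univ χ (Finset.mem_univ (1 : ZMod p))
    rw [quadraticChar_sum_zero hF] at this
    have h1 : χ 1 = 1 := by simp [hχ]
    omega
  rw [h0, Finset.sum_congr rfl h1, h2, h3]


/-- Perron's theorem: for an odd prime `p` with `p = 4n−1` or `p = 4n+1`, `S` the set of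
nonzero squares of `F_p`, `S₀ = S ∪ {0}` and `a ≠ 0`, the cardinality of `(S₀+a) ∩ S₀`
equals `n` if `p = 4n−1` or `a ∉ S`, and equals `n+1` if `p = 4n+1` and `a ∈ S`. -/
theorem perron_quadratic_residues {p n : ℕ} (hp : p.Prime) (hodd : Odd p)
    (hn : p = 4 * n - 1 ∨ p = 4 * n + 1)
    (S S₀ : Set (ZMod p))
    (hS : S = {x : ZMod p | x ≠ 0 ∧ IsSquare x}) (hS₀ : S₀ = S ∪ {0})
    (a : ZMod p) (ha : a ≠ 0) :
    ((p = 4 * n - 1 ∨ a ∉ S) → (((· + a) '' S₀) ∩ S₀).ncard = n) ∧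
    ((p = 4 * n + 1 ∧ a ∈ S) → (((· + a) '' S₀) ∩ S₀).ncard = n + 1) := by
  classical
  haveI : Fact p.Prime := ⟨hp⟩
  have hp2 : p ≠ 2 := by
    rintro rfl
    exact (Nat.not_odd_iff_even.mpr (by norm_num)) hodd
  have hple : 2 ≤ p := hp.two_le
  have hF : ringChar (ZMod p) ≠ 2 := by rw [ZMod.ringChar_zmod_n]; exact hp2
  set χ := quadraticChar (ZMod p) with hχ
  set A : Finset (ZMod p) := Finset.univ.filter (fun y => y ∈ S₀ ∧ y - a ∈ S₀) with hA
  have hset : (((· + a) '' S₀) ∩ S₀) = ↑A := by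
    ext y
    simp only [Set.mem_inter_iff, Set.mem_image, hA, Finset.coe_filter,
      Set.mem_setOf_eq, Finset.mem_univ, true_and]
    constructor
    · rintro ⟨⟨x, hx, rfl⟩, hy⟩
      exact ⟨hy, by simpa using hx⟩
    · rintro ⟨hy, hya⟩
      exact ⟨⟨y - a, hya, by ring⟩, hy⟩
  have hncard : (((· + a) '' S₀) ∩ S₀).ncard = A.card := by
    rw [hset, Set.ncard_coe_finset]
  -- indicator function
  have hg : ∀ y : ZMod p,
      (if y ∈ S₀ then (2:ℤ) else 0) = (if y = 0 then (1:ℤ) else 0) + 1 + χ y := by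
    intro y
    by_cases h0 : y = 0
    · subst h0
      have h0S : (0 : ZMod p) ∈ S₀ := by rw [hS₀]; simp
      simp [h0S, hχ, quadraticChar_zero]
    · have hmem : y ∈ S₀ ↔ IsSquare y := by
        rw [hS₀, hS]; simp [h0]
      by_cases hsq : IsSquare y
      · rw [if_pos (hmem.mpr hsq), if_neg h0, hχ,
          (quadraticChar_one_iff_isSquare h0).mpr hsq]; ring
      · rw [if_neg (fun hy => hsq (hmem.mp hy)), if_neg h0, hχ,
          quadraticChar_neg_one_iff_not_isSquare.mpr hsq]; ring
  -- the nine sums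
  have e1 : ∑ y : ZMod p, (if y = 0 then (1:ℤ) else 0) * (if y - a = 0 then (1:ℤ) else 0)
      = 0 := by
    apply Finset.sum_eq_zero
    intro y _
    by_cases h : y = 0
    · subst h
      simp [sub_eq_zero, ha, Ne.symm ha]
    · simp [h]
  have e2 : ∑ y : ZMod p, (if y = 0 then (1:ℤ) else 0) = 1 := by
    rw [Finset.sum_ite_eq' Finset.univ (0 : ZMod p) (fun _ => (1:ℤ))]
    simp
  have e3 : ∑ y : ZMod p, (if y = 0 then (1:ℤ) else 0) * χ (y - a) = χ (-a) := by
    rw [Finset.sum_eq_single 0 (fun b _ hb => by simp [hb])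
      (fun h => absurd (Finset.mem_univ _) h)]
    simp
  have e4 : ∑ y : ZMod p, (if y - a = 0 then (1:ℤ) else 0) = 1 := by
    simp only [sub_eq_zero]
    rw [Finset.sum_ite_eq' Finset.univ (a : ZMod p) (fun _ => (1:ℤ))]
    simp
  have e5 : ∑ _y : ZMod p, (1:ℤ) = p := by
    simp [Finset.card_univ, ZMod.card]
  have e6 : ∑ y : ZMod p, χ (y - a) = 0 := by
    have := Equiv.sum_comp (Equiv.subRight a) (χ : ZMod p → ℤ)
    simp only [Equiv.subRight_apply] at this
    rw [this, hχ, quadraticChar_sum_zero hF]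
  have e7 : ∑ y : ZMod p, (if y - a = 0 then (1:ℤ) else 0) * χ y = χ a := by
    rw [Finset.sum_eq_single a (fun b _ hb => by simp [sub_eq_zero, hb])
      (fun h => absurd (Finset.mem_univ _) h)]
    simp
  have e8 : ∑ y : ZMod p, χ y = 0 := by rw [hχ, quadraticChar_sum_zero hF]
  have e9 : ∑ y : ZMod p, χ y * χ (y - a) = -1 := jacobi_aux hF ha
  have hsum : ∑ y : ZMod p,
      ((if y = 0 then (1:ℤ) else 0) + 1 + χ y) * ((if y - a = 0 then (1:ℤ) else 0) + 1 + χ (y - a))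
      = (p : ℤ) + 1 + χ a + χ (-a) := by
    have expand : ∀ y : ZMod p,
        ((if y = 0 then (1:ℤ) else 0) + 1 + χ y) * ((if y - a = 0 then (1:ℤ) else 0) + 1 + χ (y - a))
        = (if y = 0 then (1:ℤ) else 0) * (if y - a = 0 then (1:ℤ) else 0)
          + ((if y = 0 then (1:ℤ) else 0)
          + ((if y = 0 then (1:ℤ) else 0) * χ (y - a)
          + ((if y - a = 0 then (1:ℤ) else 0)
          + ((1:ℤ)
          + (χ (y - a)
          + ((if y - a = 0 then (1:ℤ) else 0) * χ y
          + (χ y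
          + χ y * χ (y - a)))))))) := fun y => by ring
    rw [Finset.sum_congr rfl (fun y _ => expand y)]
    simp only [Finset.sum_add_distrib]
    rw [e1, e2, e3, e4, e5, e6, e7, e8, e9]
    ring
  have hprod : ∀ y : ZMod p,
      (if y ∈ S₀ ∧ y - a ∈ S₀ then (4:ℤ) else 0)
      = (if y ∈ S₀ then (2:ℤ) else 0) * (if y - a ∈ S₀ then (2:ℤ) else 0) := by
    intro y
    by_cases h1 : y ∈ S₀ <;> by_cases h2 : y - a ∈ S₀ <;> simp [h1, h2]
  have hcard : ∑ y : ZMod p, (if y ∈ S₀ ∧ y - a ∈ S₀ then (4:ℤ) else 0)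
      = 4 * (A.card : ℤ) := by
    have h1 : ∀ y : ZMod p, (if y ∈ S₀ ∧ y - a ∈ S₀ then (4:ℤ) else 0)
        = 4 * (if y ∈ S₀ ∧ y - a ∈ S₀ then (1:ℤ) else 0) := by
      intro y; split_ifs <;> ring
    rw [Finset.sum_congr rfl (fun y _ => h1 y), ← Finset.mul_sum]
    congr 1
    rw [Finset.sum_boole, hA]
  have key : 4 * (A.card : ℤ) = (p : ℤ) + 1 + χ a + χ (-1) * χ a := by
    rw [← hcard, Finset.sum_congr rfl (fun y _ => hprod y),
      Finset.sum_congr rfl (fun y _ => by rw [hg y, hg (y - a)]), hsum]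
    have : χ (-a) = χ (-1) * χ a := by rw [← map_mul, neg_one_mul]
    rw [this]
  have haS : a ∈ S ↔ IsSquare a := by rw [hS]; simp [ha]
  rcases hn with hn1 | hn2
  · -- p = 4n - 1
    have hn4 : p + 1 = 4 * n := by omega
    have hp4 : p % 4 = 3 := by omega
    have hns : ¬ IsSquare (-1 : ZMod p) := by
      rw [ZMod.exists_sq_eq_neg_one_iff]
      simp [hp4]
    have hχn : χ (-1) = -1 := quadraticChar_neg_one_iff_not_isSquare.mpr hns
    have hcardn : A.card = n := by
      rw [hχn] at key
      have hz : (p : ℤ) + 1 = 4 * n := by exact_mod_cast hn4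
      have : (A.card : ℤ) = n := by linarith
      exact_mod_cast this
    refine ⟨fun _ => by rw [hncard, hcardn], fun ⟨hp', _⟩ => absurd hp' (by omega)⟩
  · -- p = 4n + 1
    have hsqn : IsSquare (-1 : ZMod p) := by
      rw [ZMod.exists_sq_eq_neg_one_iff]
      omega
    have hn0 : (-1 : ZMod p) ≠ 0 := by
      simp
    have hχn : χ (-1) = 1 := (quadraticChar_one_iff_isSquare hn0).mpr hsqn
    rw [hχn, one_mul] at key
    constructor
    · rintro (hp' | hna)
      · exact absurd hp' (by omega)
      · have hχa : χ a = -1 :=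
          quadraticChar_neg_one_iff_not_isSquare.mpr (fun h => hna (haS.mpr h))
        rw [hχa] at key
        have hz : (p : ℤ) = 4 * n + 1 := by exact_mod_cast hn2
        have : (A.card : ℤ) = n := by linarith
        rw [hncard]
        exact_mod_cast this
    · rintro ⟨_, haS'⟩
      have hχa : χ a = 1 := (quadraticChar_one_iff_isSquare ha).mpr (haS.mp haS')
      rw [hχa] at key
      have hz : (p : ℤ) = 4 * n + 1 := by exact_mod_cast hn2
      have : (A.card : ℤ) = n + 1 := by linarith
      rw [hncard]
      exact_mod_cast this
end

section
/- Let p be a prime with p ≡ 1 (mod 4). For e ∈ F_p define φ(e) = Σ_{m ∈ F_p} χ(m)·χ(m² + e) (an integer). Then for any nonzero square r and any non-square n in F_p, the integer φ(e) is even for all e, and (φ(r)/2)² + (φ(n)/2)² = p. -/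
/-!
Since `χ(-1) = 1`, the terms for `m` and `-m` agree, so `φ(e)` is even. The substitution
`m ↦ t m` gives `φ(t² e) = χ(t) φ(e)`, so `φ(e)²` takes one value `A` on the nonzero squares and one
value `B` on the non-squares, while `φ(0) = 0`; hence `∑ₑ φ(e)² = (p - 1)(A + B) / 2`. On the other
hand, expanding the square and summing over `e` first, the Jacobi-sum identity
`∑ₑ χ(a + e) χ(b + e) = -1` for `a ≠ b` gives `∑ₑ φ(e)² = 2p(p - 1)`. So `A + B = 4p`.
-/

open Finset

namespace Jacobsthal

theorem even_sum_of_apply_neg {R : Type*} [Ring R] [NoZeroDivisors R] [Nontrivial R] [Fintype R]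
    (hR : ringChar R ≠ 2) {f : R → ℤ} (hf : ∀ x, f (-x) = f x) (h0 : Even (f 0)) :
    Even (∑ x, f x) := by
  rw [← ZMod.intCast_eq_zero_iff_even, Int.cast_sum]
  refine sum_ninvolution (fun x => -x) (fun x => by rw [hf]; exact CharTwo.add_self_eq_zero _)
    (fun x hx hneg => hx ?_) (fun _ => mem_univ _) neg_neg
  rw [(Ring.eq_self_iff_eq_zero_of_char_ne_two hR).mp hneg]
  exact ZMod.intCast_eq_zero_iff_even.mpr h0

variable {F : Type*} [Field F] [Fintype F]

theorem ringChar_ne_two_of_card_mod_four_eq_one (h : Fintype.card F % 4 = 1) :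
    ringChar F ≠ 2 := fun hF => by
  have := FiniteField.even_card_of_char_two hF
  omega

variable [DecidableEq F]

local notation "χ" => quadraticChar F

theorem quadraticChar_neg_one_of_card_mod_four_eq_one (h : Fintype.card F % 4 = 1) :
    χ (-1) = 1 := by
  rw [quadraticChar_one_iff_isSquare (neg_ne_zero.mpr one_ne_zero),
    FiniteField.isSquare_neg_one_iff]
  omega

theorem quadraticChar_neg_of_neg_one (h1 : χ (-1) = 1) (x : F) : χ (-x) = χ x := by
  rw [neg_eq_neg_one_mul, map_mul, h1, one_mul]

theorem sum_quadraticChar_sq : ∑ x : F, χ x ^ 2 = Fintype.card F - 1 := by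
  rw [← sum_erase_add _ _ (mem_univ 0), quadraticChar_zero, sq, mul_zero, add_zero,
    sum_congr rfl fun x hx => quadraticChar_sq_one (ne_of_mem_erase hx), sum_const,
    card_erase_of_mem (mem_univ _), card_univ, nsmul_one, Nat.cast_pred Fintype.card_pos]

theorem sum_quadraticChar_mul_add (hF : ringChar F ≠ 2) {c : F} (hc : c ≠ 0) :
    ∑ x, χ x * χ (x + c) = -1 := by
  have hJ : jacobiSum χ χ = -χ (-1) := by
    rw [← jacobiSum_nontrivial_inv (quadraticChar_ne_one hF), (quadraticChar_isQuadratic F).inv]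
  calc ∑ x, χ x * χ (x + c) = ∑ y, χ (-c * y) * χ (-c * y + c) :=
        (Fintype.sum_equiv (Equiv.mulLeft₀ (-c) (neg_ne_zero.mpr hc)) _ _ fun _ => rfl).symm
    _ = ∑ y, χ (-1) * χ c ^ 2 * (χ y * χ (1 - y)) := by
        refine sum_congr rfl fun y _ => ?_
        rw [show -c * y + c = c * (1 - y) by ring, neg_eq_neg_one_mul c]
        simp only [map_mul]
        ring
    _ = -1 := by
        rw [← mul_sum, ← jacobiSum, hJ, quadraticChar_sq_one hc, mul_one, mul_neg,
          ← sq, quadraticChar_sq_one (neg_ne_zero.mpr one_ne_zero)]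

theorem sum_quadraticChar_add_mul_add (hF : ringChar F ≠ 2) (a b : F) :
    ∑ e, χ (a + e) * χ (b + e) = if a = b then (Fintype.card F : ℤ) - 1 else -1 := by
  split_ifs with hab
  · subst hab
    simp_rw [← sq]
    exact (Fintype.sum_equiv (Equiv.addLeft a) _ _ fun _ => rfl).trans sum_quadraticChar_sq
  · calc ∑ e, χ (a + e) * χ (b + e) = ∑ x, χ x * χ (x + (b - a)) :=
          Fintype.sum_equiv (Equiv.addLeft a) _ _ fun e => by simp only [Equiv.coe_addLeft]; ring_nf
      _ = -1 := sum_quadraticChar_mul_add hF (sub_ne_zero.mpr (Ne.symm hab))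

theorem sum_quadraticChar_mul_of_sq_eq (hF : ringChar F ≠ 2) (h1 : χ (-1) = 1) (m : F) :
    ∑ k with k ^ 2 = m ^ 2, χ m * χ k = 2 * χ m ^ 2 := by
  rcases eq_or_ne m 0 with rfl | hm
  · simp
  · have hpair : ({k | k ^ 2 = m ^ 2} : Finset F) = {m, -m} := by
      ext k
      simp [sq_eq_sq_iff_eq_or_eq_neg]
    have hm' : m ≠ -m := fun h => hm ((Ring.eq_self_iff_eq_zero_of_char_ne_two hF).mp h.symm)
    rw [hpair, sum_pair hm', quadraticChar_neg_of_neg_one h1]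
    ring

variable (F) in
def jacobsthalSum (e : F) : ℤ := ∑ m, χ m * χ (m ^ 2 + e)

theorem jacobsthalSum_even (hF : ringChar F ≠ 2) (h1 : χ (-1) = 1) (e : F) :
    Even (jacobsthalSum F e) :=
  even_sum_of_apply_neg hF (fun m => by rw [neg_sq, quadraticChar_neg_of_neg_one h1]) (by simp)

theorem jacobsthalSum_zero (hF : ringChar F ≠ 2) : jacobsthalSum F 0 = 0 := by
  rw [jacobsthalSum, ← quadraticChar_sum_zero hF]
  refine sum_congr rfl fun m _ => ?_
  rcases eq_or_ne m 0 with rfl | hm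
  · simp
  · rw [add_zero, quadraticChar_sq_one' hm, mul_one]

theorem jacobsthalSum_sq_mul {t : F} (ht : t ≠ 0) (e : F) :
    jacobsthalSum F (t ^ 2 * e) = χ t * jacobsthalSum F e := by
  rw [jacobsthalSum, jacobsthalSum, mul_sum]
  refine (Fintype.sum_equiv (Equiv.mulLeft₀ t ht) _ _ fun m => ?_).symm
  rw [Equiv.mulLeft₀_apply, show (t * m) ^ 2 + t ^ 2 * e = t ^ 2 * (m ^ 2 + e) by ring,
    map_mul, map_mul, quadraticChar_sq_one' ht]
  ring

theorem jacobsthalSum_sq_eq_of_quadraticChar_eq {a b : F} (ha : a ≠ 0) (hb : b ≠ 0)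
    (h : χ a = χ b) : jacobsthalSum F a ^ 2 = jacobsthalSum F b ^ 2 := by
  have hsq : IsSquare (a * b⁻¹) := by
    refine (quadraticChar_one_iff_isSquare (mul_ne_zero ha (inv_ne_zero hb))).mp ?_
    rw [map_mul, h, ← map_mul, mul_inv_cancel₀ hb, map_one]
  obtain ⟨t, ht⟩ := hsq
  have ht0 : t ≠ 0 := by rintro rfl; simp_all
  have hab : a = t ^ 2 * b := by rw [sq, ← ht, mul_assoc, inv_mul_cancel₀ hb, mul_one]
  rw [hab, jacobsthalSum_sq_mul ht0, mul_pow, quadraticChar_sq_one ht0, one_mul]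

theorem sum_jacobsthalSum_sq (hF : ringChar F ≠ 2) (h1 : χ (-1) = 1) :
    ∑ e, jacobsthalSum F e ^ 2 = 2 * Fintype.card F * (Fintype.card F - 1) := by
  calc ∑ e, jacobsthalSum F e ^ 2
      = ∑ m, ∑ k, χ m * χ k * ∑ e, χ (m ^ 2 + e) * χ (k ^ 2 + e) := by
        simp_rw [sq (jacobsthalSum F _), jacobsthalSum, sum_mul_sum, mul_sum]
        rw [sum_comm]
        refine sum_congr rfl fun m _ => ?_
        rw [sum_comm]
        exact sum_congr rfl fun k _ => sum_congr rfl fun e _ => by ring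
    _ = Fintype.card F * ∑ m, ∑ k with k ^ 2 = m ^ 2, χ m * χ k - (∑ m, χ m) * ∑ k, χ k := by
        simp only [sum_quadraticChar_add_mul_add hF, sum_filter, mul_sum, sum_mul,
          ← sum_sub_distrib]
        refine sum_congr rfl fun m _ => sum_congr rfl fun k _ => ?_
        simp only [eq_comm (a := m ^ 2)]
        split_ifs <;> ring
    _ = 2 * Fintype.card F * (Fintype.card F - 1) := by
        simp only [sum_quadraticChar_mul_of_sq_eq hF h1, ← mul_sum, sum_quadraticChar_sq,
          quadraticChar_sum_zero hF]
        ring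

theorem two_mul_sum_eq_of_quadraticChar_eq (hF : ringChar F ≠ 2) {f : F → ℤ} (h0 : f 0 = 0)
    (hf : ∀ a b, a ≠ 0 → b ≠ 0 → χ a = χ b → f a = f b) {r n : F} (hr : r ≠ 0)
    (hr' : IsSquare r) (hn : ¬IsSquare n) :
    2 * ∑ e, f e = (Fintype.card F - 1) * (f r + f n) := by
  have hχr : χ r = 1 := (quadraticChar_one_iff_isSquare hr).mpr hr'
  have hχn : χ n = -1 := quadraticChar_neg_one_iff_not_isSquare.mpr hn
  have hn0 : n ≠ 0 := by rintro rfl; exact hn IsSquare.zero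
  have hpt : ∀ e, 2 * f e = (f r + f n) * χ e ^ 2 + (f r - f n) * χ e := by
    intro e
    rcases eq_or_ne e 0 with rfl | he
    · simp [h0]
    rcases quadraticChar_dichotomy he with hχe | hχe
    · rw [hf e r he hr (hχe.trans hχr.symm), hχe]; ring
    · rw [hf e n he hn0 (hχe.trans hχn.symm), hχe]; ring
  rw [mul_sum, sum_congr rfl fun e _ => hpt e, sum_add_distrib, ← mul_sum, ← mul_sum,
    sum_quadraticChar_sq, quadraticChar_sum_zero hF]
  ring

theorem jacobsthalSum_sq_add_sq (h : Fintype.card F % 4 = 1) {r n : F} (hr : r ≠ 0)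
    (hr' : IsSquare r) (hn : ¬IsSquare n) :
    jacobsthalSum F r ^ 2 + jacobsthalSum F n ^ 2 = 4 * Fintype.card F := by
  have hF := ringChar_ne_two_of_card_mod_four_eq_one h
  have hsum := two_mul_sum_eq_of_quadraticChar_eq hF (f := fun e => jacobsthalSum F e ^ 2)
    (by simp [jacobsthalSum_zero hF]) (fun _ _ => jacobsthalSum_sq_eq_of_quadraticChar_eq)
    hr hr' hn
  rw [sum_jacobsthalSum_sq hF (quadraticChar_neg_one_of_card_mod_four_eq_one h)] at hsum
  have hq : (Fintype.card F : ℤ) - 1 ≠ 0 := by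
    have := Fintype.one_lt_card (α := F)
    omega
  exact mul_left_cancel₀ hq (by linear_combination -hsum)

end Jacobsthal

open Jacobsthal in
/-- Jacobsthal's theorem: for a prime `p ≡ 1 (mod 4)`, with
`φ(e) = ∑_{m ∈ F_p} χ(m)·χ(m² + e)`, every `φ(e)` is even, and for any nonzero square `r`
and any non-square `n` in `F_p` one has `(φ(r)/2)² + (φ(n)/2)² = p`. -/
theorem jacobsthal_sum_of_two_squares {p : ℕ} [Fact p.Prime] (h4 : p % 4 = 1)
    (φ : ZMod p → ℤ)
    (hφ : ∀ e : ZMod p,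
      φ e = ∑ m : ZMod p, quadraticChar (ZMod p) m * quadraticChar (ZMod p) (m ^ 2 + e))
    (r : ZMod p) (hr : r ≠ 0) (hr' : IsSquare r)
    (n : ZMod p) (hn : ¬ IsSquare n) :
    (∀ e : ZMod p, Even (φ e)) ∧ (φ r / 2) ^ 2 + (φ n / 2) ^ 2 = (p : ℤ) := by
  obtain rfl : φ = jacobsthalSum (ZMod p) := funext hφ
  rw [← ZMod.card p] at h4
  have heven := jacobsthalSum_even (ringChar_ne_two_of_card_mod_four_eq_one h4)
    (quadraticChar_neg_one_of_card_mod_four_eq_one h4)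
  refine ⟨heven, ?_⟩
  have h4p := jacobsthalSum_sq_add_sq h4 hr hr' hn
  obtain ⟨a, ha⟩ := heven r
  obtain ⟨b, hb⟩ := heven n
  rw [ha, hb, ZMod.card] at h4p
  rw [ha, hb, ← two_mul, ← two_mul, Int.mul_ediv_cancel_left _ two_ne_zero,
    Int.mul_ediv_cancel_left _ two_ne_zero]
  exact mul_left_cancel₀ (four_ne_zero (α := ℤ)) (by linear_combination h4p)
end

section
/- Let q be a prime power with q ≡ 1 (mod 4), let Q be the Jacobsthal matrix of F_q, let R be the all-ones row vector of length q, and let B = [[0, R],[Rᵀ, Q]] of order q+1. Define the 2(q+1)×2(q+1) integer matrix H = B ⊗ [[1,1],[1,−1]] + I_{q+1} ⊗ [[1,−1],[−1,−1]] (Kronecker products). Then H is a symmetric Hadamard matrix of order 2(q+1): Hᵀ = H, all entries of H are ±1, and H·Hᵀ = 2(q+1)·I. -/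
/-!
The bordered Jacobsthal matrix `B` is indexed by `Option F`, with `none` the border. Since `Q Qᵀ = q I - J` and every row of
`Q` sums to zero (the off-diagonal entries of `Q Qᵀ` are the Jacobi sum `χ(-1) J(χ, χ) = -1`),
`B Bᵀ = q I`; since `χ(-1) = 1` for `q ≡ 1 (mod 4)`, `B` is symmetric, so `B² = q I`.
The blocks `S = [[1,1],[1,-1]]` and `T = [[1,-1],[-1,-1]]` are symmetric, anticommute, and
square to `2 I`, so `H² = B² ⊗ S² + B ⊗ (S T + T S) + I ⊗ T² = 2(q+1) I`. As `B` has zero diagonal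
and `±1` off it, every `2 × 2` block of `H` is `T` or `±S`.
-/

open Matrix

open Kronecker

open Finset

section Paley

variable {F : Type*} [Field F] [Fintype F] [DecidableEq F]

theorem quadraticChar_sub_comm (h : IsSquare (-1 : F)) (u v : F) :
    quadraticChar F (u - v) = quadraticChar F (v - u) := by
  have hneg : quadraticChar F (-1) = 1 :=
    (quadraticChar_one_iff_isSquare (neg_ne_zero.mpr one_ne_zero)).mpr h
  rw [← neg_sub, neg_eq_neg_one_mul, map_mul, hneg, one_mul]

theorem quadraticChar_sum_sub (hF : ringChar F ≠ 2) (v : F) :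
    ∑ u : F, quadraticChar F (u - v) = 0 := by
  rw [← quadraticChar_sum_zero hF]
  exact Fintype.sum_equiv (Equiv.subRight v) _ _ fun _ => rfl

theorem quadraticChar_sum_sq_sub (u : F) :
    ∑ w : F, quadraticChar F (w - u) ^ 2 = Fintype.card F - 1 := by
  have hterm : ∀ w, quadraticChar F (w - u) ^ 2 = 1 - if w = u then 1 else 0 := by
    intro w
    split_ifs with h
    · simp [h]
    · rw [quadraticChar_sq_one (sub_ne_zero.mpr h), sub_zero]
  rw [Fintype.sum_congr _ _ hterm, sum_sub_distrib]
  simp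

/-- Substituting `w = u + (v - u) x` turns the sum into `χ(-1) J(χ, χ) = -χ(-1)²`. -/
theorem quadraticChar_sum_mul_sub_sub (hF : ringChar F ≠ 2) {u v : F} (huv : u ≠ v) :
    ∑ w : F, quadraticChar F (w - u) * quadraticChar F (w - v) = -1 := by
  set χ := quadraticChar F
  have hc : v - u ≠ 0 := sub_ne_zero.mpr huv.symm
  calc ∑ w, χ (w - u) * χ (w - v)
      = ∑ x, χ (u + (v - u) * x - u) * χ (u + (v - u) * x - v) :=
        (Fintype.sum_equiv ((Equiv.mulLeft₀ _ hc).trans (Equiv.addLeft u)) _ _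
          fun _ => rfl).symm
    _ = ∑ x, χ (-1) * (χ x * χ (1 - x)) := by
        refine Fintype.sum_congr _ _ fun x => ?_
        rw [show u + (v - u) * x - u = (v - u) * x by ring,
          show u + (v - u) * x - v = (v - u) * (-1) * (1 - x) by ring]
        simp only [map_mul]
        linear_combination (χ (-1) * χ x * χ (1 - x)) * quadraticChar_sq_one hc
    _ = χ (-1) * jacobiSum χ χ := by rw [← mul_sum]; rfl
    _ = -1 := by
        have hneg : χ (-1) ^ 2 = 1 := quadraticChar_sq_one (neg_ne_zero.mpr one_ne_zero)
        have hJ := jacobiSum_nontrivial_inv (quadraticChar_ne_one hF)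
        rw [(quadraticChar_isQuadratic F).inv] at hJ
        linear_combination χ (-1) * hJ - hneg

variable (F) in
def paleyConferenceMatrix : Matrix (Option F) (Option F) ℤ
  | some u, some v => quadraticChar F (v - u)
  | none, none => 0
  | none, some _ => 1
  | some _, none => 1

@[simp] theorem paleyConferenceMatrix_none_none : paleyConferenceMatrix F none none = 0 := rfl
@[simp] theorem paleyConferenceMatrix_none_some (v : F) :
    paleyConferenceMatrix F none (some v) = 1 := rfl
@[simp] theorem paleyConferenceMatrix_some_none (u : F) :
    paleyConferenceMatrix F (some u) none = 1 := rfl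
@[simp] theorem paleyConferenceMatrix_some_some (u v : F) :
    paleyConferenceMatrix F (some u) (some v) = quadraticChar F (v - u) := rfl

theorem paleyConferenceMatrix_apply_self (i : Option F) : paleyConferenceMatrix F i i = 0 := by
  cases i <;> simp

theorem paleyConferenceMatrix_apply_of_ne {i j : Option F} (hij : i ≠ j) :
    paleyConferenceMatrix F i j = 1 ∨ paleyConferenceMatrix F i j = -1 := by
  match i, j with
  | none, none => exact absurd rfl hij
  | none, some _ | some _, none => exact Or.inl rfl
  | some u, some v =>
    exact quadraticChar_dichotomy (sub_ne_zero.mpr fun h => hij (congrArg some h.symm))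

theorem paleyConferenceMatrix_transpose (h : IsSquare (-1 : F)) :
    (paleyConferenceMatrix F)ᵀ = paleyConferenceMatrix F := by
  ext (_ | u) (_ | v)
  · rfl
  · rfl
  · rfl
  · exact quadraticChar_sub_comm h u v

theorem paleyConferenceMatrix_mul_transpose (hF : ringChar F ≠ 2) :
    paleyConferenceMatrix F * (paleyConferenceMatrix F)ᵀ = (Fintype.card F : ℤ) • 1 := by
  ext (_ | u) (_ | v) <;>
    simp only [mul_apply, Fintype.sum_option, transpose_apply, paleyConferenceMatrix_none_none,
      paleyConferenceMatrix_none_some, paleyConferenceMatrix_some_none,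
      paleyConferenceMatrix_some_some, Matrix.smul_apply, smul_eq_mul, one_mul, mul_zero, mul_one,
      zero_add]
  · simp
  · rw [quadraticChar_sum_sub hF, one_apply_ne (Option.some_ne_none v).symm, mul_zero]
  · rw [quadraticChar_sum_sub hF, one_apply_ne (Option.some_ne_none u), mul_zero]
  · rcases eq_or_ne u v with rfl | huv
    · rw [← Fintype.sum_congr _ _ fun _ => sq _, quadraticChar_sum_sq_sub, one_apply_eq]
      ring
    · rw [quadraticChar_sum_mul_sub_sub hF huv, one_apply_ne (Option.some_injective _ |>.ne huv)]
      ring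

end Paley

section Kronecker

variable {R m n : Type*} [DecidableEq m]

theorem kronecker_add_one_kronecker_mul_self [Fintype m] [Fintype n] [DecidableEq n]
    [CommRing R] {A : Matrix m m R} {S T : Matrix n n R} {a b c : R} (hA : A * A = a • 1)
    (hS : S * S = b • 1) (hT : T * T = c • 1) (hST : S * T + T * S = 0) :
    (A ⊗ₖ S + 1 ⊗ₖ T) * (A ⊗ₖ S + 1 ⊗ₖ T) = (a * b + c) • 1 := by
  have hcross : A ⊗ₖ (S * T) + A ⊗ₖ (T * S) = 0 := by
    rw [← kronecker_add, hST, kronecker_zero]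
  calc (A ⊗ₖ S + 1 ⊗ₖ T) * (A ⊗ₖ S + 1 ⊗ₖ T)
      = (A * A) ⊗ₖ (S * S) + (A ⊗ₖ (S * T) + A ⊗ₖ (T * S)) + 1 ⊗ₖ (T * T) := by
        simp only [add_mul, mul_add, ← mul_kronecker_mul, Matrix.mul_one, Matrix.one_mul]
        abel
    _ = (a * b + c) • 1 := by
        rw [hA, hS, hT, hcross, add_zero, smul_kronecker, kronecker_smul, kronecker_smul,
          one_kronecker_one, smul_smul, ← add_smul]

theorem kronecker_add_one_kronecker_apply_eq_one_or_neg_one [Ring R] {A : Matrix m m R}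
    {S T : Matrix n n R} (hAdiag : ∀ i, A i i = 0) (hA : ∀ i j, i ≠ j → A i j = 1 ∨ A i j = -1)
    (hS : ∀ k l, S k l = 1 ∨ S k l = -1) (hT : ∀ k l, T k l = 1 ∨ T k l = -1) (x y : m × n) :
    (A ⊗ₖ S + 1 ⊗ₖ T : Matrix (m × n) (m × n) R) x y = 1 ∨
      (A ⊗ₖ S + 1 ⊗ₖ T : Matrix (m × n) (m × n) R) x y = -1 := by
  obtain ⟨i, k⟩ := x
  obtain ⟨j, l⟩ := y
  simp only [Matrix.add_apply, kroneckerMap_apply]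
  rcases eq_or_ne i j with rfl | hij
  · rw [hAdiag, zero_mul, one_apply_eq, one_mul, zero_add]
    exact hT k l
  · rw [one_apply_ne hij, zero_mul, add_zero]
    rcases hA i j hij with h | h <;> rcases hS k l with h' | h' <;> simp [h, h']

end Kronecker

/-- Paley's second construction: for a prime power `q ≡ 1 (mod 4)`, let `B` be the
matrix `[[0, R],[Rᵀ, Q]]` of order `q+1` (with `Q` the Jacobsthal matrix of `F_q` and `R`
the all-ones row), and let `H = B ⊗ [[1,1],[1,−1]] + I ⊗ [[1,−1],[−1,−1]]`. Then `H` is a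
symmetric Hadamard matrix of order `2(q+1)`. -/
theorem paley_hadamard_type_II {F : Type*} [Field F] [Fintype F] [DecidableEq F]
    (h4 : Fintype.card F % 4 = 1)
    (B : Matrix (Option F) (Option F) ℤ)
    (hB : ∀ i j : Option F, B i j =
      match i, j with
      | none, none => 0
      | none, some _ => 1
      | some _, none => 1
      | some u, some v => quadraticChar F (v - u))
    (H : Matrix (Option F × Fin 2) (Option F × Fin 2) ℤ)
    (hH : H = B ⊗ₖ !![1, 1; 1, -1] +
      (1 : Matrix (Option F) (Option F) ℤ) ⊗ₖ !![1, -1; -1, -1]) :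
    Hᵀ = H ∧ (∀ i j, H i j = 1 ∨ H i j = -1) ∧
      H * Hᵀ = (2 * ((Fintype.card F : ℤ) + 1)) •
        (1 : Matrix (Option F × Fin 2) (Option F × Fin 2) ℤ) := by
  obtain rfl : B = paleyConferenceMatrix F :=
    Matrix.ext fun i j => (hB i j).trans (by cases i <;> cases j <;> rfl)
  have hF : ringChar F ≠ 2 := fun h => by
    have := FiniteField.even_card_of_char_two h
    omega
  have hBt := paleyConferenceMatrix_transpose
    ((FiniteField.isSquare_neg_one_iff (F := F)).mpr (by omega))
  have hBB := paleyConferenceMatrix_mul_transpose hF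
  rw [hBt] at hBB
  have hHt : Hᵀ = H := by
    rw [hH, transpose_add, ← kroneckerMap_transpose, ← kroneckerMap_transpose, hBt, transpose_one]
    congr 2 <;> decide
  refine ⟨hHt, ?_, ?_⟩
  · rw [hH]
    refine kronecker_add_one_kronecker_apply_eq_one_or_neg_one paleyConferenceMatrix_apply_self
      (fun _ _ => paleyConferenceMatrix_apply_of_ne) ?_ ?_ <;> simp [Fin.forall_fin_two]
  · rw [hHt, hH, kronecker_add_one_kronecker_mul_self hBB (b := 2) (c := 2) (by decide) (by decide)
      (by decide)]
    congr 1
    ring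
end

section
/- Let m = 2^k with k ≥ 1. Then the set {±1}^m of all 2^m vectors of length m with entries ±1 can be partitioned into 2^m/m classes, each of size m, such that any two distinct vectors in the same class are orthogonal (i.e., each class forms the rows of a Hadamard matrix of order m). -/
/-!
Index the coordinates by `V = (ZMod 2)ᵏ` and read a `±1` vector as `f : V → ZMod 2` through
`t ↦ (-1)ᵗ`. The additive homomorphisms `V → ZMod 2` form a subgroup of size `2ᵏ` of the additive
group of all such `f`; the classes are its cosets. Two distinct functions in one coset differ by a
nonzero homomorphism `φ`, so the inner product of their sign vectors is `∑ₓ (-1)^(φ x)`, the sum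
of a nontrivial additive character, which vanishes.
-/

open Finset

def zmodTwoSignChar : AddChar (ZMod 2) ℤ where
  toFun t := if t = 0 then 1 else -1
  map_zero_eq_one' := rfl
  map_add_eq_mul' := by decide

lemma zmodTwoSignChar_one : zmodTwoSignChar 1 = -1 := rfl

lemma zmodTwoSignChar_eq_one_iff (t : ZMod 2) : zmodTwoSignChar t = 1 ↔ t = 0 := by
  revert t; decide

lemma zmodTwoSignChar_mul_self (t : ZMod 2) : zmodTwoSignChar t * zmodTwoSignChar t = 1 := by
  revert t; decide

lemma zmodTwoSignChar_eq_one_or_eq_neg_one (t : ZMod 2) :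
    zmodTwoSignChar t = 1 ∨ zmodTwoSignChar t = -1 := by
  revert t; decide

abbrev SignVector (ι : Type*) := {v : ι → ℤ // ∀ i, v i = 1 ∨ v i = -1}

def SignVector.equivZModTwo (ι : Type*) : SignVector ι ≃ (ι → ZMod 2) where
  toFun v i := if v.1 i = 1 then 0 else 1
  invFun f := ⟨fun i => zmodTwoSignChar (f i), fun i => zmodTwoSignChar_eq_one_or_eq_neg_one _⟩
  left_inv v := by
    ext i
    rcases v.2 i with h | h <;> simp [h, zmodTwoSignChar_one]
  right_inv f := by
    funext i
    simp only [zmodTwoSignChar_eq_one_iff]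
    generalize f i = t
    revert t; decide

lemma SignVector.coe_equivZModTwo_symm_apply {ι : Type*} (f : ι → ZMod 2) (i : ι) :
    ((SignVector.equivZModTwo ι).symm f).1 i = zmodTwoSignChar (f i) := rfl

lemma QuotientAddGroup.natCard_fiber_mk {α : Type*} [AddGroup α] (s : AddSubgroup α) (q : α ⧸ s) :
    Nat.card {a : α // (a : α ⧸ s) = q} = Nat.card s := by
  rw [← mul_one (Nat.card s), ← Nat.card_unique (α := ({q} : Set (α ⧸ s))), ← Nat.card_prod]
  exact Nat.card_congr (QuotientAddGroup.preimageMkEquivAddSubgroupProdSet s {q})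

lemma natCard_addMonoidHom_pi_zmod_two (ι : Type*) [Fintype ι] :
    Nat.card ((ι → ZMod 2) →+ ZMod 2) = 2 ^ Fintype.card ι := by
  classical
  rw [Nat.card_congr (AddMonoidHom.toZModLinearMapEquiv 2).toEquiv,
    ← Nat.card_congr ((Pi.basisFun (ZMod 2) ι).constr (ZMod 2)).toEquiv]
  simp

section

variable {V : Type*} [AddGroup V]

lemma sum_zmodTwoSignChar_eq_zero [Fintype V] {φ : V →+ ZMod 2} (hφ : φ ≠ 0) :
    ∑ x, zmodTwoSignChar (φ x) = 0 := by
  refine AddChar.sum_eq_zero_of_ne_one (ψ := zmodTwoSignChar.compAddMonoidHom φ) fun h => hφ ?_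
  ext x
  simpa [zmodTwoSignChar_eq_one_iff] using DFunLike.congr_fun h x

variable (V) in
def homSubgroup : AddSubgroup (V → ZMod 2) := (AddMonoidHom.coeFn V (ZMod 2)).range

lemma natCard_homSubgroup : Nat.card (homSubgroup V) = Nat.card (V →+ ZMod 2) :=
  (Nat.card_congr (Equiv.ofInjective _ DFunLike.coe_injective)).symm

lemma natCard_quotient_homSubgroup [Finite V] :
    Nat.card ((V → ZMod 2) ⧸ homSubgroup V) = 2 ^ Nat.card V / Nat.card (V →+ ZMod 2) := by
  have hcard := (homSubgroup V).card_eq_card_quotient_mul_card_addSubgroup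
  rw [Nat.card_fun, Nat.card_zmod, natCard_homSubgroup] at hcard
  rw [hcard, Nat.mul_div_cancel _ (natCard_homSubgroup (V := V) ▸ Nat.card_pos)]

lemma sum_zmodTwoSignChar_mul_eq_zero [Fintype V] {f g : V → ZMod 2}
    (hfg : (f : (V → ZMod 2) ⧸ homSubgroup V) = g) (hne : f ≠ g) :
    ∑ x, zmodTwoSignChar (f x) * zmodTwoSignChar (g x) = 0 := by
  obtain ⟨φ, hφ⟩ := QuotientAddGroup.eq.1 hfg
  have hg : ∀ x, g x = f x + φ x := fun x => (congrFun (eq_neg_add_iff_add_eq.1 hφ) x).symm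
  have hφ0 : φ ≠ 0 := by
    rintro rfl
    exact hne (funext fun x => by simp [hg])
  calc ∑ x, zmodTwoSignChar (f x) * zmodTwoSignChar (g x)
      = ∑ x, zmodTwoSignChar (φ x) := by
        refine Finset.sum_congr rfl fun x _ => ?_
        rw [hg, AddChar.map_add_eq_mul, ← mul_assoc, zmodTwoSignChar_mul_self, one_mul]
    _ = 0 := sum_zmodTwoSignChar_eq_zero hφ0

end

namespace SignVector

variable {ι V : Type*}

def reindexEquivZModTwo (σ : ι ≃ V) : SignVector ι ≃ (V → ZMod 2) :=
  (equivZModTwo ι).trans (σ.arrowCongr (Equiv.refl _))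

lemma sum_mul_eq_sum_zmodTwoSignChar_mul [Fintype ι] [Fintype V] (σ : ι ≃ V)
    (v w : SignVector ι) :
    ∑ i, v.1 i * w.1 i = ∑ x, zmodTwoSignChar (reindexEquivZModTwo σ v x) *
      zmodTwoSignChar (reindexEquivZModTwo σ w x) := by
  rw [← σ.sum_comp]
  refine Finset.sum_congr rfl fun i _ => ?_
  simp [reindexEquivZModTwo, ← coe_equivZModTwo_symm_apply]

def homCoset [AddGroup V] (σ : ι ≃ V) (v : SignVector ι) : (V → ZMod 2) ⧸ homSubgroup V :=
  reindexEquivZModTwo σ v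

lemma natCard_homCoset_fiber [AddGroup V] (σ : ι ≃ V) (q : (V → ZMod 2) ⧸ homSubgroup V) :
    Nat.card {v : SignVector ι // homCoset σ v = q} = Nat.card (V →+ ZMod 2) := by
  rw [← natCard_homSubgroup, ← QuotientAddGroup.natCard_fiber_mk]
  exact Nat.card_congr ((reindexEquivZModTwo σ).subtypeEquiv fun _ => Iff.rfl)

lemma sum_mul_eq_zero_of_homCoset_eq [Fintype ι] [AddGroup V] [Fintype V] (σ : ι ≃ V)
    {v w : SignVector ι}
    (hvw : homCoset σ v = homCoset σ w) (hne : v ≠ w) : ∑ i, v.1 i * w.1 i = 0 := by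
  rw [sum_mul_eq_sum_zmodTwoSignChar_mul σ]
  exact sum_zmodTwoSignChar_mul_eq_zero hvw ((reindexEquivZModTwo σ).injective.ne hne)

end SignVector

open SignVector in
theorem paley_partition_hadamard_general (k : ℕ) :
    ∃ c : {v : Fin (2 ^ k) → ℤ // ∀ i, v i = 1 ∨ v i = -1} → Fin (2 ^ (2 ^ k) / 2 ^ k),
      (∀ j, Nat.card {v : {v : Fin (2 ^ k) → ℤ // ∀ i, v i = 1 ∨ v i = -1} // c v = j}
          = 2 ^ k) ∧
      (∀ v w : {v : Fin (2 ^ k) → ℤ // ∀ i, v i = 1 ∨ v i = -1},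
        c v = c w → v ≠ w → ∑ i, v.1 i * w.1 i = 0) := by
  let σ : Fin (2 ^ k) ≃ (Fin k → ZMod 2) := finFunctionFinEquiv.symm
  have hcard : Nat.card (((Fin k → ZMod 2) → ZMod 2) ⧸ homSubgroup (Fin k → ZMod 2)) =
      2 ^ 2 ^ k / 2 ^ k := by
    rw [natCard_quotient_homSubgroup, natCard_addMonoidHom_pi_zmod_two]
    simp
  let e := (Finite.equivFin _).trans (finCongr hcard)
  refine ⟨fun v => e (homCoset σ v), fun j => ?_, fun v w hvw =>
    sum_mul_eq_zero_of_homCoset_eq σ (e.injective hvw)⟩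
  rw [Nat.card_congr (Equiv.subtypeEquivRight fun _ => (e.eq_symm_apply).symm),
    natCard_homCoset_fiber, natCard_addMonoidHom_pi_zmod_two]
  simp

/-- Paley's partition theorem: for `m = 2^k` with `k ≥ 1`, the `2^m` vectors of length `m`
with entries `±1` can be partitioned into `2^m/m` classes, each of size `m`, such that any
two distinct vectors in the same class are orthogonal. -/
theorem paley_partition_hadamard (k : ℕ) (hk : 1 ≤ k) :
    ∃ c : {v : Fin (2 ^ k) → ℤ // ∀ i, v i = 1 ∨ v i = -1} → Fin (2 ^ (2 ^ k) / 2 ^ k),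
      (∀ j, Nat.card {v : {v : Fin (2 ^ k) → ℤ // ∀ i, v i = 1 ∨ v i = -1} // c v = j}
          = 2 ^ k) ∧
      (∀ v w : {v : Fin (2 ^ k) → ℤ // ∀ i, v i = 1 ∨ v i = -1},
        c v = c w → v ≠ w → ∑ i, v.1 i * w.1 i = 0) :=
  paley_partition_hadamard_general k
end

section
/- Let H be a Hadamard matrix of order m with m ≥ 3. Then m is divisible by 4. -/
open Matrix

/-- If a Hadamard matrix of order `m ≥ 3` exists, then `4 ∣ m`. -/
theorem hadamard_order_div_four {m : ℕ} (hm : 3 ≤ m)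
    (H : Matrix (Fin m) (Fin m) ℤ)
    (hE : ∀ i j, H i j = 1 ∨ H i j = -1)
    (hH : H * Hᵀ = (m : ℤ) • (1 : Matrix (Fin m) (Fin m) ℤ)) :
    4 ∣ m := by
  have h3 : ∀ i k : Fin m, i ≠ k → ∑ j, H i j * H k j = 0 := by
    intro i k hik
    have := congrFun (congrFun hH i) k
    simpa [Matrix.mul_apply, Matrix.transpose_apply, Matrix.one_apply, hik] using this
  have i0 : Fin m := ⟨0, by omega⟩
  set i1 : Fin m := ⟨1, by omega⟩ with hi1
  set i2 : Fin m := ⟨2, by omega⟩ with hi2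
  set i0 : Fin m := ⟨0, by omega⟩ with hi0
  set f : Fin m → ℤ := fun j => H i0 j * H i1 j with hfdef
  set g : Fin m → ℤ := fun j => H i0 j * H i2 j with hgdef
  have hsq : ∀ i j, H i j * H i j = 1 := by
    intro i j; rcases hE i j with h | h <;> simp [h]
  have hf : ∑ j, f j = 0 := h3 i0 i1 (by simp [hi0, hi1, Fin.ext_iff])
  have hg : ∑ j, g j = 0 := h3 i0 i2 (by simp [hi0, hi2, Fin.ext_iff])
  have hfg : ∑ j, f j * g j = 0 := by
    have h12 := h3 i1 i2 (by simp [hi1, hi2, Fin.ext_iff])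
    calc ∑ j, f j * g j = ∑ j, H i1 j * H i2 j := by
          refine Finset.sum_congr rfl fun j _ => ?_
          rcases hE i0 j with h0 | h0 <;> simp [hfdef, hgdef, h0] <;> ring
      _ = 0 := h12
  have key : (m : ℤ) = ∑ j, (1 + f j) * (1 + g j) := by
    have : ∑ j, (1 + f j) * (1 + g j)
        = ∑ j : Fin m, (1 : ℤ) + (∑ j, f j + (∑ j, g j + ∑ j, f j * g j)) := by
      rw [← Finset.sum_add_distrib, ← Finset.sum_add_distrib, ← Finset.sum_add_distrib]
      exact Finset.sum_congr rfl fun j _ => by ring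
    simp [this, hf, hg, hfg]
  have hdvd : (4:ℤ) ∣ ∑ j, (1 + f j) * (1 + g j) := by
    refine Finset.dvd_sum fun j _ => ?_
    rcases hE i0 j with h0 | h0 <;> rcases hE i1 j with h1 | h1 <;>
      rcases hE i2 j with h2 | h2 <;>
      simp [hfdef, hgdef, h0, h1, h2] <;> norm_num
  have h4 : (4:ℤ) ∣ (m:ℤ) := key ▸ hdvd
  exact_mod_cast h4
end

section
/- Let G be a finite simple graph on n ≥ 2 vertices, and for distinct vertices u, v let Δ_{uv} denote the number of vertices w ∉ {u,v} that are adjacent to exactly one of u and v. Then there exist distinct vertices u, v with Δ_{uv} ≤ ⌊(n−1)/2⌋; that is, the minimum of Δ_{uv} over all pairs of distinct vertices is at most ⌊(n−1)/2⌋. -/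
open Finset

lemma four_mul_le_sq {d k : ℕ} (h : d ≤ k) : 4 * d * (k - d) ≤ k * k := by
  obtain ⟨e, rfl⟩ := Nat.exists_eq_add_of_le h
  have : d + e - d = e := by omega
  rw [this]
  have h2 := two_mul_le_add_sq d e
  nlinarith

/-- In any finite simple graph on `n ≥ 2` vertices there are distinct vertices `u`, `v`
such that the number `Δ_{uv}` of vertices `w ∉ {u,v}` adjacent to exactly one of `u` and
`v` is at most `⌊(n−1)/2⌋`. -/
theorem min_delta_le {V : Type*} [Fintype V] [DecidableEq V]
    (G : SimpleGraph V) [DecidableRel G.Adj]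
    (hn : 2 ≤ Fintype.card V) :
    ∃ u v : V, u ≠ v ∧
      (Finset.univ.filter fun w : V => w ≠ u ∧ w ≠ v ∧
          ((G.Adj u w ∧ ¬ G.Adj v w) ∨ (G.Adj v w ∧ ¬ G.Adj u w))).card
        ≤ (Fintype.card V - 1) / 2 := by
  by_contra hcon
  push_neg at hcon
  set n := Fintype.card V with hn'
  set m := (n - 1) / 2 with hm
  -- lower bound for the sum over all ordered pairs
  have key : ∀ p : V × V, p ∈ (Finset.univ : Finset V).offDiag →
      m + 1 ≤ (Finset.univ.filter fun w : V => w ≠ p.1 ∧ w ≠ p.2 ∧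
          ((G.Adj p.1 w ∧ ¬ G.Adj p.2 w) ∨ (G.Adj p.2 w ∧ ¬ G.Adj p.1 w))).card := by
    intro p hp
    rw [Finset.mem_offDiag] at hp
    exact hcon p.1 p.2 hp.2.2
  have hlow := Finset.card_nsmul_le_sum _ _ _ key
  -- double counting: swap the order of summation
  have hswap : (∑ p ∈ (Finset.univ : Finset V).offDiag,
      (Finset.univ.filter fun w : V => w ≠ p.1 ∧ w ≠ p.2 ∧
          ((G.Adj p.1 w ∧ ¬ G.Adj p.2 w) ∨ (G.Adj p.2 w ∧ ¬ G.Adj p.1 w))).card)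
      = ∑ w : V, 2 * G.degree w * (n - 1 - G.degree w) := by
    simp_rw [Finset.card_filter]
    rw [Finset.sum_comm]
    refine Finset.sum_congr rfl ?_
    intro w _
    rw [← Finset.card_filter]
    set A := G.neighborFinset w with hA
    set B := Aᶜ.erase w with hB
    have hwA : w ∉ A := by simp [hA]
    have hAB : ((Finset.univ : Finset V).offDiag.filter
        (fun p : V × V => w ≠ p.1 ∧ w ≠ p.2 ∧
          ((G.Adj p.1 w ∧ ¬ G.Adj p.2 w) ∨ (G.Adj p.2 w ∧ ¬ G.Adj p.1 w))))
        = A ×ˢ B ∪ B ×ˢ A := by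
      ext p
      simp only [Finset.mem_filter, Finset.mem_offDiag, Finset.mem_union, Finset.mem_product,
        Finset.mem_erase, Finset.mem_compl, SimpleGraph.mem_neighborFinset, Finset.mem_univ,
        true_and, hA, hB]
      constructor
      · rintro ⟨hne, hw1, hw2, h | h⟩
        · exact Or.inl ⟨h.1.symm, Ne.symm hw2, fun hc => h.2 hc.symm⟩
        · exact Or.inr ⟨⟨Ne.symm hw1, fun hc => h.2 hc.symm⟩, h.1.symm⟩
      · rintro (⟨h1, h2, h3⟩ | ⟨⟨h2, h3⟩, h1⟩)
        · refine ⟨fun e => h3 (e ▸ h1), h1.ne, Ne.symm h2, Or.inl ⟨h1.symm, fun hc => h3 hc.symm⟩⟩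
        · refine ⟨fun e => h3 (e ▸ h1), Ne.symm h2, h1.ne, Or.inr ⟨h1.symm, fun hc => h3 hc.symm⟩⟩
    have hdisj : Disjoint (A ×ˢ B) (B ×ˢ A) := by
      rw [Finset.disjoint_left]
      rintro p hp1 hp2
      rw [Finset.mem_product] at hp1 hp2
      have := (Finset.mem_erase.mp hp2.1).2
      rw [Finset.mem_compl] at this
      exact this hp1.1
    have hBcard : B.card = n - 1 - G.degree w := by
      rw [hB, Finset.card_erase_of_mem (by simp [hA]), Finset.card_compl]
      have : A.card = G.degree w := rfl
      rw [this]
      have := G.degree_lt_card_verts w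
      omega
    have hAcard : A.card = G.degree w := rfl
    rw [hAB, Finset.card_union_of_disjoint hdisj, Finset.card_product, Finset.card_product,
      hAcard, hBcard]
    ring
  rw [hswap] at hlow
  -- upper bound each term
  have hup : (∑ w : V, 2 * (2 * G.degree w * (n - 1 - G.degree w))) ≤ n * ((n-1) * (n-1)) := by
    calc (∑ w : V, 2 * (2 * G.degree w * (n - 1 - G.degree w)))
        ≤ ∑ w : V, (n-1) * (n-1) := by
          refine Finset.sum_le_sum ?_
          intro w _
          have hd : G.degree w ≤ n - 1 := by
            have := G.degree_lt_card_verts w; omega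
          have h4 := four_mul_le_sq (k := n - 1) hd
          calc 2 * (2 * G.degree w * (n - 1 - G.degree w))
              = 4 * G.degree w * (n - 1 - G.degree w) := by ring
            _ ≤ (n-1)*(n-1) := h4
      _ = n * ((n-1)*(n-1)) := by
          rw [Finset.sum_const, Finset.card_univ, smul_eq_mul]
  rw [← Finset.mul_sum] at hup
  have hcard : (Finset.univ : Finset V).offDiag.card = n * (n - 1) := by
    rw [Finset.offDiag_card, Finset.card_univ]
    show n * n - n = n * (n - 1)
    cases n with
    | zero => rfl
    | succ k => rw [Nat.succ_sub_one, Nat.mul_succ, Nat.add_sub_cancel]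
  rw [hcard, smul_eq_mul] at hlow
  have hfinal : 2 * (n * (n - 1) * (m + 1)) ≤ n * ((n - 1) * (n - 1)) :=
    le_trans (Nat.mul_le_mul_left 2 hlow) hup
  have hpos : 0 < n * (n - 1) := Nat.mul_pos (by omega) (by omega)
  have h2 : 2 * (m + 1) ≤ n - 1 := by
    have : n * (n - 1) * (2 * (m + 1)) ≤ n * (n - 1) * (n - 1) := by
      calc n * (n - 1) * (2 * (m + 1)) = 2 * (n * (n - 1) * (m + 1)) := by ring
        _ ≤ n * ((n - 1) * (n - 1)) := hfinal
        _ = n * (n - 1) * (n - 1) := by ring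
    exact Nat.le_of_mul_le_mul_left this hpos
  omega
end
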